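/- arXiv:1509.09075 — 2 statements merged into one kernel-verified Lean document; each statement's English description precedes it below -/
import Mathlib

section
/- Let p be a prime and r = p^t with t ≥ 1 an integer. If α is a nonzero element of the field F_p((T^{-1})) whose integral part has positive degree and which satisfies α^{r+1} - T·α^r + T·α = 0, then 1/α = Σ_{n≥0} T^{-r^n}; in particular, 1/α satisfies the equation β = 1/T + β^r. -/
/-!
Put `X = 1/T`, so `F_p((T⁻¹))` is the Laurent series field in `X`. Dividing the equation by
`T α^{r+1}` shows that `β = 1/α` satisfies `β = X + β^r`, and `β` has positive valuation. The
series `Θ = Σ X^{r^n}` satisfies the same equation, because over `F_p` the `r`-th power of a power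
series is its expansion `X ↦ X^r`. Finally the difference `δ` of two solutions of positive
valuation satisfies `δ^r = δ`, which forces `δ = 0` since `v(δ^r) ≥ r v(δ) > v(δ)` otherwise.
-/

/-- The Laurent series `Θ₂ = Σ_{n ≥ 0} T^{-r^n}` in `F_p((T⁻¹))`, realized as
`LaurentSeries (ZMod p)` in the variable `X = 1/T` (so `T^{-r^n} = X^{r^n}`). -/
noncomputable def theta2 (p r : ℕ) : LaurentSeries (ZMod p) :=
  open Classical in
  ((PowerSeries.mk fun k => if ∃ n : ℕ, k = r ^ n then 1 else 0 : PowerSeries (ZMod p)) :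
    LaurentSeries (ZMod p))

open PowerSeries HahnSeries

namespace PowerSeries

theorem map_iterateFrobenius_expand {R : Type*} [CommRing R] (p : ℕ) [ExpChar R p]
    (f : R⟦X⟧) (n : ℕ) :
    map (iterateFrobenius R p n) (expand (p ^ n) (pow_ne_zero n (expChar_ne_zero R p)) f) =
      f ^ p ^ n := by
  ext m
  have htrunc : coeff m (f ^ p ^ n) = Polynomial.coeff ((trunc (m + 1) f) ^ p ^ n) m := by
    rw [← coeff_coe_trunc_of_lt m.lt_succ_self, ← trunc_trunc_pow,
      coeff_coe_trunc_of_lt m.lt_succ_self, ← Polynomial.coe_pow, Polynomial.coeff_coe]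
  rw [htrunc, ← Polynomial.map_iterateFrobenius_expand, Polynomial.coeff_map, coeff_map,
    coeff_expand, Polynomial.coeff_expand (pow_pos (expChar_pos R p) n)]
  split_ifs
  · rw [coeff_trunc, if_pos (Nat.lt_succ_of_le (Nat.div_le_self m _))]
  · rfl

theorem zmod_pow_char_pow_eq_expand {p : ℕ} [Fact p.Prime] (f : (ZMod p)⟦X⟧) (n : ℕ) :
    f ^ p ^ n = expand (p ^ n) (pow_ne_zero n (Fact.out : p.Prime).ne_zero) f := by
  rw [← map_iterateFrobenius_expand, RingHom.ext_zmod (iterateFrobenius _ p n) (RingHom.id _),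
    map_id]
  rfl

open Classical in
noncomputable def thetaSeries (R : Type*) [Semiring R] (r : ℕ) : R⟦X⟧ :=
  mk fun k => if ∃ n : ℕ, k = r ^ n then 1 else 0

theorem thetaSeries_eq_X_add_expand {R : Type*} [CommRing R] {r : ℕ} (hr : 1 < r) :
    thetaSeries R r = X + expand r (by omega) (thetaSeries R r) := by
  classical
  ext k
  rw [map_add, coeff_X, coeff_expand]
  by_cases hk : r ∣ k
  · obtain ⟨m, rfl⟩ := hk
    have hpow : (∃ n, r * m = r ^ n) ↔ ∃ n, m = r ^ n := by
      constructor
      · rintro ⟨_ | n, hn⟩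
        · exact absurd (Nat.eq_one_of_mul_eq_one_right (pow_zero r ▸ hn)) hr.ne'
        · exact ⟨n, Nat.eq_of_mul_eq_mul_left (by omega : 0 < r) (by rw [hn, pow_succ'])⟩
      · rintro ⟨n, rfl⟩
        exact ⟨n + 1, (pow_succ' r n).symm⟩
    have hne : r * m ≠ 1 := fun h => hr.ne' (Nat.eq_one_of_mul_eq_one_right h)
    simp only [thetaSeries, coeff_mk, if_pos (dvd_mul_right r m), if_neg hne,
      Nat.mul_div_cancel_left m (by omega : 0 < r), hpow, zero_add]
  · have hpow : (∃ n, k = r ^ n) ↔ k = 1 := by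
      constructor
      · rintro ⟨_ | n, rfl⟩
        · rfl
        · exact absurd (dvd_pow_self r n.succ_ne_zero) hk
      · rintro rfl
        exact ⟨0, rfl⟩
    simp only [thetaSeries, coeff_mk, if_neg hk, hpow, add_zero]

theorem zero_lt_orderTop_coe {R : Type*} [Semiring R] {f : R⟦X⟧} (hf : constantCoeff f = 0) :
    0 < (f : LaurentSeries R).orderTop := by
  refine (WithTop.coe_lt_coe.2 zero_lt_one).trans_le (le_orderTop_iff_forall.2 fun j hj => ?_)
  rw [coeff_coe]
  split_ifs with hneg
  · rfl
  · rw [show j = 0 by have := WithTop.coe_lt_coe.1 hj; omega]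
    simpa using hf

end PowerSeries

namespace HahnSeries

variable {Γ R : Type*}

theorem eq_zero_of_pow_eq_self [AddCommMonoid Γ] [LinearOrder Γ] [IsOrderedCancelAddMonoid Γ]
    [Semiring R] {x : R⟦Γ⟧} {n : ℕ} (hn : 1 < n) (hx : 0 < x.orderTop) (h : x ^ n = x) :
    x = 0 := by
  by_contra hx0
  obtain ⟨g, hg⟩ := WithTop.ne_top_iff_exists.1 (orderTop_ne_top.2 hx0)
  rw [← hg, WithTop.coe_pos] at hx
  have hle : n • x.orderTop ≤ x.orderTop := by
    simpa only [h] using orderTop_nsmul_le_orderTop_pow (x := x) (n := n)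
  rw [← hg, ← WithTop.coe_nsmul, WithTop.coe_le_coe] at hle
  exact hle.not_gt (by simpa only [one_nsmul] using nsmul_lt_nsmul_left hx hn)

theorem eq_of_eq_add_pow_expChar_pow [AddCommMonoid Γ] [LinearOrder Γ]
    [IsOrderedCancelAddMonoid Γ] [CommRing R] (p : ℕ) [ExpChar R p] {t : ℕ} (ht : 1 < p ^ t)
    {c x y : R⟦Γ⟧} (hx : 0 < x.orderTop) (hy : 0 < y.orderTop)
    (hxc : x = c + x ^ p ^ t) (hyc : y = c + y ^ p ^ t) : x = y := by
  have : ExpChar R⟦Γ⟧ p := expChar_of_injective_ringHom C_injective p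
  refine sub_eq_zero.1 (eq_zero_of_pow_eq_self ht
    ((lt_min hx hy).trans_le min_orderTop_le_orderTop_sub) ?_)
  rw [sub_pow_expChar_pow]
  linear_combination hyc - hxc

theorem zero_lt_orderTop_inv [AddCommGroup Γ] [LinearOrder Γ] [IsOrderedAddMonoid Γ]
    [Field R] {x : R⟦Γ⟧} (hx : x ≠ 0) (h : x.order < 0) : 0 < x⁻¹.orderTop := by
  have hsum := order_mul hx (inv_ne_zero hx)
  rw [mul_inv_cancel₀ hx, order_one] at hsum
  refine zero_lt_orderTop_of_order ?_
  rw [eq_neg_of_add_eq_zero_right hsum.symm]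
  exact neg_pos.2 h

end HahnSeries

theorem inv_eq_add_inv_pow {K : Type*} [Field K] {T X α : K} {q : ℕ} (hTX : T * X = 1)
    (hα : α ≠ 0) (h : α ^ (q + 1) - T * α ^ q + T * α = 0) :
    α⁻¹ = X + α⁻¹ ^ q := by
  have hB : α * α⁻¹ = 1 := mul_inv_cancel₀ hα
  have hA : α ^ q * α⁻¹ ^ q = 1 := by rw [← mul_pow, hB, one_pow]
  -- `h` multiplied by `X α^{-(q+1)}`, simplified with `α α⁻¹ = 1` and `T X = 1`
  linear_combination (-X * α⁻¹ ^ (q + 1)) * h + X * (α * α⁻¹ * hA + hB)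
    - α⁻¹ * (T * X * hA + hTX) + α⁻¹ ^ q * (T * X * hB + hTX)

theorem theta2_eq_coe_thetaSeries (p r : ℕ) :
    theta2 p r = (thetaSeries (ZMod p) r : LaurentSeries (ZMod p)) :=
  rfl

theorem theta2_eq_single_add_pow {p : ℕ} [Fact p.Prime] {t : ℕ} (ht : 1 ≤ t) :
    theta2 p (p ^ t) = single 1 1 + theta2 p (p ^ t) ^ p ^ t := by
  have hr : 1 < p ^ t := Nat.one_lt_pow (by omega) (Fact.out : p.Prime).one_lt
  rw [theta2_eq_coe_thetaSeries, ← coe_X, ← map_pow, ← map_add, zmod_pow_char_pow_eq_expand,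
    ← thetaSeries_eq_X_add_expand hr]

theorem zero_lt_orderTop_theta2 (p : ℕ) {r : ℕ} (hr : r ≠ 0) : 0 < (theta2 p r).orderTop := by
  rw [theta2_eq_coe_thetaSeries]
  refine zero_lt_orderTop_coe ?_
  rw [thetaSeries, ← coeff_zero_eq_constantCoeff_apply, coeff_mk, if_neg]
  rintro ⟨n, hn⟩
  exact pow_ne_zero n hr hn.symm

/-- If `α ∈ F_p((T⁻¹))` is nonzero, its integral part has positive degree
(in the variable `X = 1/T` this reads `α.order < 0`), and
`α^{r+1} - T·α^r + T·α = 0` (with `T = HahnSeries.single (-1) 1` and `r = p^t`, `t ≥ 1`),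
then `1/α = Σ_{n ≥ 0} T^{-r^n}`; in particular `β = 1/α` satisfies `β = 1/T + β^r`
(with `1/T = HahnSeries.single 1 1`). -/
theorem stmt9 (p : ℕ) [Fact p.Prime] (t : ℕ) (ht : 1 ≤ t)
    (α : LaurentSeries (ZMod p)) (hα : α ≠ 0) (hord : α.order < 0)
    (heq : α ^ (p ^ t + 1) - HahnSeries.single (-1 : ℤ) 1 * α ^ p ^ t
        + HahnSeries.single (-1 : ℤ) 1 * α = 0) :
    α⁻¹ = theta2 p (p ^ t) ∧
    α⁻¹ = HahnSeries.single (1 : ℤ) 1 + α⁻¹ ^ p ^ t := by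
  have hTX : (single (-1 : ℤ) 1 : LaurentSeries (ZMod p)) * single 1 1 = 1 := by
    rw [single_mul_single, neg_add_cancel, mul_one, single_zero_one]
  have hβ : α⁻¹ = single 1 1 + α⁻¹ ^ p ^ t := inv_eq_add_inv_pow hTX hα heq
  have hr : 1 < p ^ t := Nat.one_lt_pow (by omega) (Fact.out : p.Prime).one_lt
  refine ⟨eq_of_eq_add_pow_expChar_pow p hr (zero_lt_orderTop_inv hα hord)
    (zero_lt_orderTop_theta2 p (Nat.zero_lt_of_lt hr).ne') hβ (theta2_eq_single_add_pow ht), hβ⟩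
end

section
/- Let (W_n)_{n≥0} be the sequence of finite words over the alphabet {1, 2} defined by W_0 = ∅, W_1 = 1, and W_n = W_{n-1} · 2 · W_{n-2} · 2 · W_{n-1} for all n ≥ 2, and let W = (W(n))_{n≥1} be the infinite word over {1, 2} beginning with W_n for all n (each W_n is a prefix of W_{n+1}). Then W is not ultimately periodic: there exist no integers N ≥ 1 and P ≥ 1 such that W(n + P) = W(n) for all n ≥ N. -/
/-- The words `W₀ = ε`, `W₁ = 1`, `Wₙ = Wₙ₋₁ · 2 · Wₙ₋₂ · 2 · Wₙ₋₁` over the alphabet `{1, 2}`. -/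
def W : ℕ → List ℕ
  | 0 => []
  | 1 => [1]
  | n + 2 => W (n + 1) ++ [2] ++ W n ++ [2] ++ W (n + 1)

section seq
variable {u : ℕ → ℤ}

lemma per_all (hrec : ∀ k, u (k+2) = 2 * u (k+1) + u k) {n T : ℕ}
    (h0 : u (n + T) = u n) (h1 : u (n + T + 1) = u (n + 1)) :
    ∀ k, u (k + T) = u k := by
  have down : ∀ i, i ≤ n → u (n - i + T) = u (n - i) ∧ u (n - i + 1 + T) = u (n - i + 1) := by
    intro i
    induction i with
    | zero =>
      intro _
      simp only [Nat.sub_zero]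
      exact ⟨h0, by rw [show n + 1 + T = n + T + 1 by omega]; exact h1⟩
    | succ i ih =>
      intro hi
      obtain ⟨e0, e1⟩ := ih (by omega)
      set k := n - (i+1) with hk
      have hk1 : n - i = k + 1 := by omega
      have hk2 : n - i + 1 = k + 2 := by omega
      rw [hk1] at e0
      rw [hk2] at e1
      have r1 := hrec k
      have r2 := hrec (k + T)
      rw [show k + T + 2 = k + 2 + T by omega, show k + T + 1 = k + 1 + T by omega, e1, e0] at r2
      exact ⟨by omega, e0⟩
  have up : ∀ i, u (n + i + T) = u (n + i) ∧ u (n + i + 1 + T) = u (n + i + 1) := by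
    intro i
    induction i with
    | zero => exact ⟨h0, by rw [show n + 0 + 1 + T = n + T + 1 by omega, show n + 0 + 1 = n + 1 by omega]; exact h1⟩
    | succ i ih =>
      obtain ⟨e0, e1⟩ := ih
      have r1 := hrec (n + i)
      have r2 := hrec (n + i + T)
      rw [show n + i + T + 2 = n + i + 2 + T by omega, show n + i + T + 1 = n + i + 1 + T by omega,
        e1, e0] at r2
      refine ⟨?_, ?_⟩
      · rw [show n + (i+1) + T = n + i + 1 + T by omega, e1, show n + (i+1) = n + i + 1 by omega]
      · rw [show n + (i+1) + 1 + T = n + i + 2 + T by omega, show n + (i+1) + 1 = n + i + 2 by omega]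
        omega
  intro k
  rcases le_or_gt k n with h | h
  · have := (down (n - k) (by omega)).1
    rwa [show n - (n - k) = k by omega] at this
  · have := (up (k - n)).1
    rwa [show n + (k - n) = k by omega] at this

lemma per_iter {T : ℕ} (hper : ∀ k, u (k + T) = u k) : ∀ q k, u (k + q * T) = u k := by
  intro q
  induction q with
  | zero => simp
  | succ q ih =>
    intro k
    rw [show k + (q+1) * T = (k + q * T) + T by ring, hper, ih]

lemma no_pos_pos (hrec : ∀ k, u (k+2) = 2 * u (k+1) + u k) {T : ℕ} (hT : 1 ≤ T)
    (hper : ∀ k, u (k + T) = u k) {n : ℕ} (h0 : 1 ≤ u n) (h1 : 1 ≤ u (n+1)) : False := by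
  have grow : ∀ k, 1 ≤ u (n + k) ∧ 1 + (k : ℤ) ≤ u (n + k + 1) := by
    intro k
    induction k with
    | zero => simpa using ⟨h0, h1⟩
    | succ k ih =>
      obtain ⟨g0, g1⟩ := ih
      have r := hrec (n + k)
      constructor
      · rw [show n + (k+1) = n + k + 1 by omega]; linarith
      · rw [show n + (k+1) + 1 = n + k + 2 by omega, r]; push_cast; linarith
  set t := (u (n+1)).toNat with ht
  have htle : u (n+1) ≤ (t : ℤ) := Int.self_le_toNat _
  have hper' := per_iter hper t (n + 1)
  have hg := (grow (t * T)).2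
  rw [show n + t * T + 1 = n + 1 + t * T by omega, hper'] at hg
  have : (t : ℤ) ≤ ((t * T : ℕ) : ℤ) := by
    push_cast
    nlinarith [Int.ofNat_nonneg t, show (1:ℤ) ≤ (T:ℤ) by exact_mod_cast hT]
  linarith

lemma all_zero (hrec : ∀ k, u (k+2) = 2 * u (k+1) + u k) {T : ℕ} (hT : 1 ≤ T)
    (hper : ∀ k, u (k + T) = u k) : ∀ k, u k = 0 := by
  set v : ℕ → ℤ := fun k => - u k with hv
  have hrec' : ∀ k, v (k+2) = 2 * v (k+1) + v k := by
    intro k; simp only [hv, hrec k]; ring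
  have hper' : ∀ k, v (k + T) = v k := by intro k; simp only [hv, hper k]
  have sign : ∀ n, u (n+1) ≠ 0 → |u (n+1)| < |u n| := by
    intro n hne
    rcases lt_or_gt_of_ne hne with hneg | hpos
    · have hn : ¬ (u n ≤ -1) := by
        intro h
        exact no_pos_pos hrec' hT hper' (n := n) (by simp only [hv]; omega) (by simp only [hv]; omega)
      have hn2 : ¬ (u (n+2) ≤ -1) := by
        intro h
        exact no_pos_pos hrec' hT hper' (n := n+1)
          (by simp only [hv]; omega) (by simp only [hv, show n+1+1 = n+2 from rfl]; omega)
      have r := hrec n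
      rw [abs_of_neg hneg, abs_of_nonneg (by omega : 0 ≤ u n)]
      omega
    · have hn : ¬ (1 ≤ u n) := by
        intro h
        exact no_pos_pos hrec hT hper (n := n) h (by omega)
      have hn2 : ¬ (1 ≤ u (n+2)) := by
        intro h
        exact no_pos_pos hrec hT hper (n := n+1) (by omega) (by rw [show n+1+1 = n+2 from rfl]; omega)
      have r := hrec n
      rw [abs_of_pos hpos, abs_of_nonpos (by omega : u n ≤ 0)]
      omega
  have anti : ∀ n, |u (n+1)| ≤ |u n| := by
    intro n
    by_cases h : u (n+1) = 0
    · simp [h, abs_nonneg]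
    · exact le_of_lt (sign n h)
  have anti' : ∀ d k, |u (k + d)| ≤ |u k| := by
    intro d
    induction d with
    | zero => intro k; simp
    | succ d ih =>
      intro k
      calc |u (k + (d+1))| = |u (k + d + 1)| := by rw [show k + (d+1) = k + d + 1 by omega]
      _ ≤ |u (k + d)| := anti (k + d)
      _ ≤ |u k| := ih k
  have const : ∀ n, |u n| = |u 0| := by
    intro n
    refine le_antisymm (by simpa using anti' n 0) ?_
    have h1 := per_iter hper n 0
    simp only [Nat.zero_add] at h1
    calc |u 0| = |u (n * T)| := by rw [h1]
    _ = |u (n + (n * T - n))| := by rw [show n + (n * T - n) = n * T by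
          have : n ≤ n * T := Nat.le_mul_of_pos_right n hT
          omega]
    _ ≤ |u n| := anti' (n * T - n) n
  have z1 : ∀ n, u (n + 1) = 0 := by
    intro n
    by_contra hne
    have := sign n hne
    rw [const n, const (n+1)] at this
    omega
  intro k
  rcases k with _ | k
  · have r : u 2 = 2 * u 1 + u 0 := by simpa using hrec 0
    have h1 : u 1 = 0 := by simpa using z1 0
    have h2 : u 2 = 0 := by simpa using z1 1
    omega
  · exact z1 k

end seq


lemma W_len (n : ℕ) :
    (W (n+2)).length = (W (n+1)).length + 1 + (W n).length + 1 + (W (n+1)).length := by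
  simp [W]; ring

lemma W_count (n : ℕ) :
    (W (n+2)).count 1 = (W (n+1)).count 1 + (W n).count 1 + (W (n+1)).count 1 := by
  simp [W, List.count_append]; ring

lemma W_len_ge (n : ℕ) : n ≤ (W n).length := by
  induction n using Nat.strong_induction_on with
  | _ n ih =>
    match n with
    | 0 => simp [W]
    | 1 => simp [W]
    | n + 2 =>
      have h1 := ih (n+1) (by omega)
      simp [W]; omega

section count
variable (f : ℕ → ℕ)

noncomputable def g : ℕ → ℕ := fun m => ((List.range m).map (fun k => f (k+1))).count 1

lemma g_succ (m : ℕ) : g f (m+1) = g f m + (if f (m+1) = 1 then 1 else 0) := by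
  simp [g, List.range_succ, List.count_append, List.count_singleton']

lemma prefix_eq (hf : ∀ n k : ℕ, k < (W n).length → f (k + 1) = (W n).getD k 0) (n : ℕ) :
    (List.range (W n).length).map (fun k => f (k+1)) = W n := by
  apply List.ext_getElem
  · simp
  · intro i h1 h2
    simp only [List.getElem_map, List.getElem_range]
    rw [hf n i h2, List.getD_eq_getElem _ _ h2]

lemma count_eq_g (hf : ∀ n k : ℕ, k < (W n).length → f (k + 1) = (W n).getD k 0) (n : ℕ) :
    (W n).count 1 = g f ((W n).length) := by
  rw [g, prefix_eq f hf n]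

end count

/-- If `f = (f(n))_{n ≥ 1}` is the infinite word beginning with `Wₙ` for every `n` (i.e. for
each `n` the word `Wₙ` is a prefix of `f`, the `(k+1)`-st letter of `f` being the `k`-th entry
of `Wₙ` whenever `k < |Wₙ|`), then `f` is not ultimately periodic. -/
theorem stmt16 (f : ℕ → ℕ)
    (hf : ∀ n k : ℕ, k < (W n).length → f (k + 1) = (W n).getD k 0) :
    ¬∃ N P : ℕ, 1 ≤ N ∧ 1 ≤ P ∧ ∀ n : ℕ, N ≤ n → f (n + P) = f n := by
  rintro ⟨N, P, hN, hP, hfp⟩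
  set M := N - 1 with hM
  have hNM : N = M + 1 := by omega
  set G : ℕ → ℤ := fun m => (g f m : ℤ) with hG
  set a : ℤ := G (M + P) - G M with ha
  -- one-period step
  have key : ∀ m, M ≤ m → G (m + P) = G m + a := by
    intro m hm
    induction m, hm using Nat.le_induction with
    | base => simp [ha]
    | succ m hm ih =>
      have e1 : g f (m + 1 + P) = g f (m + P) + (if f (m + P + 1) = 1 then 1 else 0) := by
        rw [show m + 1 + P = (m + P) + 1 by omega, g_succ]
      have e2 : g f (m + 1) = g f m + (if f (m + 1) = 1 then 1 else 0) := g_succ f m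
      have e3 : f (m + 1 + P) = f (m + 1) := hfp (m + 1) (by omega)
      rw [show m + P + 1 = m + 1 + P by omega, e3] at e1
      have ihh := ih
      simp only [hG] at ihh ⊢
      rw [e1, e2]
      push_cast
      by_cases h : f (m + 1) = 1 <;> simp [h] <;> linarith [ihh]
  have iter : ∀ q m, M ≤ m → G (m + q * P) = G m + q * a := by
    intro q
    induction q with
    | zero => intro m _; simp
    | succ q ih =>
      intro m hm
      rw [show m + (q+1) * P = (m + q * P) + P by ring,
        key _ (by omega), ih m hm]
      push_cast; ring
  -- the Pell-like sequence
  set z : ℕ → ℤ := fun n => (P : ℤ) * ((W n).count 1 : ℤ) - a * (((W n).length : ℤ) + 1) with hz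
  have hrecz : ∀ k, z (k+2) = 2 * z (k+1) + z k := by
    intro k
    simp only [hz]
    have hl := W_len k
    have hc := W_count k
    have hl' : ((W (k+2)).length : ℤ) = 2 * ((W (k+1)).length : ℤ) + ((W k).length : ℤ) + 2 := by
      omega
    have hc' : ((W (k+2)).count 1 : ℤ) = 2 * ((W (k+1)).count 1 : ℤ) + ((W k).count 1 : ℤ) := by
      omega
    rw [hl', hc']
    ring
  set d : ℕ → ℤ := fun r => (P : ℤ) * G (M + r) - a * ((M : ℤ) + r + 1) with hd
  have hmem : ∀ n, M ≤ n → z n ∈ Finset.image d (Finset.range P) := by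
    intro n hn
    have hLn : M ≤ (W n).length := le_trans hn (W_len_ge n)
    set t := (W n).length - M with htdef
    have hLnt : (W n).length = M + (P * (t / P) + t % P) := by
      rw [Nat.div_add_mod]; omega
    set q := t / P with hq
    set r := t % P with hr
    have hrP : r < P := Nat.mod_lt _ hP
    have hGL : G ((W n).length) = G (M + r) + q * a := by
      rw [show (W n).length = (M + r) + q * P by rw [hLnt]; ring]
      exact iter q (M + r) (by omega)
    refine Finset.mem_image.mpr ⟨r, Finset.mem_range.mpr hrP, ?_⟩
    have hcg : ((W n).count 1 : ℤ) = G ((W n).length) := by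
      rw [count_eq_g f hf n]
    have hlen : ((W n).length : ℤ) = (M : ℤ) + r + q * P := by
      rw [hLnt]; push_cast; ring
    simp only [hd, hz]
    rw [hcg, hGL, hlen]
    ring
  -- pigeonhole for a repeated consecutive pair
  set S := Finset.image d (Finset.range P) with hS
  have hcard : (S ×ˢ S).card < (Finset.range (P * P + 1)).card := by
    rw [Finset.card_product, Finset.card_range]
    have h1 : S.card ≤ P := le_trans (Finset.card_image_le) (by simp)
    nlinarith
  obtain ⟨i, hi, j, hj, hij, heq⟩ :=
    Finset.exists_ne_map_eq_of_card_lt_of_maps_to hcard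
      (f := fun i => (z (M + i), z (M + i + 1)))
      (fun i _ => Finset.mk_mem_product (hmem _ (by omega)) (hmem _ (by omega)))
  -- wlog i < j
  wlog hij' : i < j generalizing i j
  · exact this j hj i hi (Ne.symm hij) heq.symm (by omega)
  set T := j - i with hT
  have hT1 : 1 ≤ T := by omega
  have h0 : z ((M + i) + T) = z (M + i) := by
    rw [show (M + i) + T = M + j by omega]
    exact (Prod.mk.injEq _ _ _ _ ▸ heq).1.symm
  have h1 : z ((M + i) + T + 1) = z ((M + i) + 1) := by
    rw [show (M + i) + T + 1 = M + j + 1 by omega]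
    exact (Prod.mk.injEq _ _ _ _ ▸ heq).2.symm
  have hper := per_all hrecz h0 h1
  have hzero := all_zero hrecz hT1 hper
  have z0 : z 0 = -a := by simp [hz, W]
  have z1 : z 1 = (P : ℤ) - 2 * a := by
    simp [hz, W]
    ring
  have e0 := hzero 0
  have e1 := hzero 1
  rw [z0] at e0
  rw [z1] at e1
  have : (P : ℤ) = 0 := by omega
  have : P = 0 := by exact_mod_cast this
  omega
end
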